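/- arXiv:0912.5077 — 2 statements merged into one kernel-verified Lean document; each statement's English description precedes it below -/
import Mathlib

section
/- Let $\phi_\varepsilon(\xi) = I_\varepsilon^{-1}\int_0^\xi e^{H(\eta)/\varepsilon}\,d\eta$ with $I_\varepsilon = \int_{-1}^1 e^{H/\varepsilon}d\eta$ and $H$ even with unique interior maximum at $0$. Then $\phi_\varepsilon \to \tfrac12\,\mathrm{sign}(\xi)$ uniformly on every compact subset of $[-1,1]\setminus\{0\}$ as $\varepsilon\to 0^+$. -/
/-!
Since `H` is even, `φ_ε(ξ) - sign ξ / 2 = -sign ξ · I_ε⁻¹ ∫_{|ξ|}^1 e^{H/ε}`, so it suffices to show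
that the normalized mass of `[δ, 1]` tends to `0`, where `δ > 0` bounds `|ξ|` from below on `K`.
If `H ≤ M` on `[δ, 1]` and `H ≥ m > M` on `[-r, r]`, this mass is at most
`(1 - δ) / (2r) · e^{(M - m)/ε}` (Laplace's principle).
-/

open MeasureTheory Filter Set Topology

theorem tendstoUniformlyOn_of_dist_le {ι α β : Type*} [PseudoMetricSpace α] {F : ι → β → α}
    {f : β → α} {l : Filter ι} {s : Set β} {g : ι → ℝ} (hg : Tendsto g l (𝓝 0))
    (h : ∀ᶠ i in l, ∀ x ∈ s, dist (f x) (F i x) ≤ g i) : TendstoUniformlyOn F f l s :=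
  Metric.tendstoUniformlyOn_iff.2 fun _ hu =>
    (h.and (hg.eventually (gt_mem_nhds hu))).mono fun _ hi x hx => (hi.1 x hx).trans_lt hi.2

theorem tendsto_mul_exp_div_nhdsGT_zero {k : ℝ} (hk : k < 0) (C : ℝ) :
    Tendsto (fun ε : ℝ => C * Real.exp (k / ε)) (𝓝[>] 0) (𝓝 0) := by
  have h : Tendsto (fun ε : ℝ => k / ε) (𝓝[>] 0) atBot := by
    simpa only [div_eq_mul_inv] using tendsto_inv_nhdsGT_zero.const_mul_atTop_of_neg hk
  simpa using (Real.tendsto_exp_atBot.comp h).const_mul C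

section EvenIntegral

variable {f : ℝ → ℝ} {a : ℝ}

theorem integral_zero_neg_of_even (hf : ∀ x, f (-x) = f x) :
    ∫ x in 0..-a, f x = -∫ x in 0..a, f x := by
  rw [intervalIntegral.integral_symm, ← neg_zero, ← intervalIntegral.integral_comp_neg]
  simp only [hf, neg_zero]

theorem integral_neg_self_of_even (hf : ∀ x, f (-x) = f x)
    (hint : IntervalIntegrable f volume (-a) a) :
    ∫ x in -a..a, f x = 2 * ∫ x in 0..a, f x := by
  have h0 : (0 : ℝ) ∈ uIcc (-a) a := by
    rw [mem_uIcc, neg_nonpos, neg_nonneg]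
    exact (le_total 0 a).imp (fun h => ⟨h, h⟩) fun h => ⟨h, h⟩
  rw [← intervalIntegral.integral_add_adjacent_intervals (hint.mono_set (uIcc_subset_uIcc_left h0))
    (hint.mono_set (uIcc_subset_uIcc_right h0)), intervalIntegral.integral_symm,
    integral_zero_neg_of_even hf]
  ring

theorem sign_div_two_sub_inv_mul_integral_of_even (hf : ∀ x, f (-x) = f x)
    (hint : IntervalIntegrable f volume (-a) a) (hI : ∫ x in -a..a, f x ≠ 0) {ξ : ℝ}
    (hξ : ξ ∈ Icc (-a) a) :
    Real.sign ξ / 2 - (∫ x in -a..a, f x)⁻¹ * ∫ x in 0..ξ, f x =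
      Real.sign ξ * ((∫ x in -a..a, f x)⁻¹ * ∫ x in |ξ|..a, f x) := by
  have half : ∀ t ∈ Icc 0 a,
      1 / 2 - (∫ x in -a..a, f x)⁻¹ * ∫ x in 0..t, f x =
        (∫ x in -a..a, f x)⁻¹ * ∫ x in t..a, f x := by
    rintro t ⟨ht0, hta⟩
    have hsub : ∀ u ∈ Icc (-a) a, ∀ v ∈ Icc (-a) a, IntervalIntegrable f volume u v :=
      fun u hu v hv => hint.mono_set (uIcc_subset_uIcc (Icc_subset_uIcc hu) (Icc_subset_uIcc hv))
    have h0 : (0 : ℝ) ∈ Icc (-a) a := ⟨by linarith, by linarith⟩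
    rw [integral_neg_self_of_even hf hint] at hI ⊢
    rw [← intervalIntegral.integral_interval_sub_left (hsub 0 h0 a ⟨by linarith, le_rfl⟩)
      (hsub 0 h0 t ⟨by linarith, hta⟩)]
    field_simp [right_ne_zero_of_mul hI]
  rcases lt_trichotomy ξ 0 with hneg | rfl | hpos
  · have h := half (-ξ) ⟨by linarith, by linarith [hξ.1]⟩
    rw [integral_zero_neg_of_even hf] at h
    rw [Real.sign_of_neg hneg, abs_of_neg hneg]
    linear_combination -h
  · simp
  · rw [Real.sign_of_pos hpos, abs_of_pos hpos]
    linear_combination half ξ ⟨hpos.le, hξ.2⟩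

theorem abs_sign_div_two_sub_inv_mul_integral_le_of_even (hf : ∀ x, f (-x) = f x)
    (hf0 : ∀ x, 0 ≤ f x) (hint : IntervalIntegrable f volume (-a) a)
    (hI : 0 < ∫ x in -a..a, f x) {ξ δ : ℝ} (hξ : ξ ∈ Icc (-a) a) (hδ0 : 0 ≤ δ) (hδ : δ ≤ |ξ|) :
    |Real.sign ξ / 2 - (∫ x in -a..a, f x)⁻¹ * ∫ x in 0..ξ, f x| ≤
      (∫ x in -a..a, f x)⁻¹ * ∫ x in δ..a, f x := by
  have hξa : |ξ| ≤ a := abs_le.2 hξ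
  have htail : 0 ≤ ∫ x in |ξ|..a, f x := intervalIntegral.integral_nonneg hξa fun x _ => hf0 x
  have hmono : ∫ x in |ξ|..a, f x ≤ ∫ x in δ..a, f x :=
    intervalIntegral.integral_mono_interval hδ hξa le_rfl (Eventually.of_forall hf0)
      (hint.mono_set (uIcc_subset_uIcc
        (Icc_subset_uIcc ⟨by linarith [abs_nonneg ξ], by linarith⟩) right_mem_uIcc))
  rw [sign_div_two_sub_inv_mul_integral_of_even hf hint hI.ne' hξ, abs_mul,
    abs_of_nonneg (by positivity : 0 ≤ (∫ x in -a..a, f x)⁻¹ * ∫ x in |ξ|..a, f x)]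
  calc |Real.sign ξ| * ((∫ x in -a..a, f x)⁻¹ * ∫ x in |ξ|..a, f x)
      ≤ 1 * ((∫ x in -a..a, f x)⁻¹ * ∫ x in |ξ|..a, f x) := by
        gcongr
        rcases Real.sign_apply_eq ξ with h | h | h <;> simp [h]
    _ ≤ (∫ x in -a..a, f x)⁻¹ * ∫ x in δ..a, f x := by
        rw [one_mul]; gcongr

end EvenIntegral

section Laplace

variable {H : ℝ → ℝ} {a b c d s t m M : ℝ}

theorem norm_inv_integral_mul_integral_exp_div_le (hH : ContinuousOn H (Icc a b)) (hcd : c < d)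
    (hsub : Icc c d ⊆ Icc a b) (hm : ∀ x ∈ Icc c d, m ≤ H x) (hM : ∀ x ∈ uIoc s t, H x ≤ M)
    {ε : ℝ} (hε : 0 < ε) :
    ‖(∫ x in a..b, Real.exp (H x / ε))⁻¹ * ∫ x in s..t, Real.exp (H x / ε)‖ ≤
      |t - s| / (d - c) * Real.exp ((M - m) / ε) := by
  have hca : a ≤ c := (hsub ⟨le_rfl, hcd.le⟩).1
  have hdb : d ≤ b := (hsub ⟨hcd.le, le_rfl⟩).2
  have hcont : ContinuousOn (fun x => Real.exp (H x / ε)) (Icc a b) :=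
    (hH.div_const ε).rexp
  have hlower : (d - c) * Real.exp (m / ε) ≤ ∫ x in a..b, Real.exp (H x / ε) :=
    calc (d - c) * Real.exp (m / ε) = ∫ _ in c..d, Real.exp (m / ε) := by simp
      _ ≤ ∫ x in c..d, Real.exp (H x / ε) :=
        intervalIntegral.integral_mono_on hcd.le intervalIntegrable_const
          ((hcont.mono hsub).intervalIntegrable_of_Icc hcd.le) fun x hx => by
            gcongr; exact hm x hx
      _ ≤ ∫ x in a..b, Real.exp (H x / ε) :=
        intervalIntegral.integral_mono_interval hca hcd.le hdb
          (Eventually.of_forall fun x => (Real.exp_pos _).le)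
          (hcont.intervalIntegrable_of_Icc (hca.trans (hcd.le.trans hdb)))
  have hupper : ‖∫ x in s..t, Real.exp (H x / ε)‖ ≤ Real.exp (M / ε) * |t - s| :=
    intervalIntegral.norm_integral_le_of_norm_le_const fun x hx => by
      rw [Real.norm_of_nonneg (Real.exp_pos _).le]
      gcongr; exact hM x hx
  have hpos : 0 < (d - c) * Real.exp (m / ε) := mul_pos (sub_pos.2 hcd) (Real.exp_pos _)
  rw [norm_mul, norm_inv, Real.norm_of_nonneg (hpos.trans_le hlower).le]
  calc (∫ x in a..b, Real.exp (H x / ε))⁻¹ * ‖∫ x in s..t, Real.exp (H x / ε)‖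
      ≤ ((d - c) * Real.exp (m / ε))⁻¹ * (Real.exp (M / ε) * |t - s|) := by
        gcongr
    _ = |t - s| / (d - c) * Real.exp ((M - m) / ε) := by
        rw [sub_div, Real.exp_sub]
        field_simp

theorem tendsto_inv_integral_mul_integral_exp_div (hH : ContinuousOn H (Icc a b)) (hcd : c < d)
    (hsub : Icc c d ⊆ Icc a b) (hm : ∀ x ∈ Icc c d, m ≤ H x) (hM : ∀ x ∈ uIoc s t, H x ≤ M)
    (hMm : M < m) :
    Tendsto (fun ε => (∫ x in a..b, Real.exp (H x / ε))⁻¹ * ∫ x in s..t, Real.exp (H x / ε))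
      (𝓝[>] 0) (𝓝 0) :=
  squeeze_zero_norm' (eventually_mem_nhdsWithin.mono fun _ hε =>
      norm_inv_integral_mul_integral_exp_div_le hH hcd hsub hm hM hε)
    (tendsto_mul_exp_div_nhdsGT_zero (sub_neg.2 hMm) _)

end Laplace

theorem exists_pos_le_abs_of_isClosed {K : Set ℝ} (hK : IsClosed K) (h0 : (0 : ℝ) ∉ K) :
    ∃ δ > 0, ∀ ξ ∈ K, δ ≤ |ξ| := by
  obtain ⟨δ, hδ, hball⟩ := Metric.isOpen_iff.mp hK.isOpen_compl 0 h0
  refine ⟨δ, hδ, fun ξ hξ => not_lt.1 fun h => hball ?_ hξ⟩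
  rwa [Metric.mem_ball, Real.dist_0_eq_abs]

/-- `φ_ε(ξ) = I_ε⁻¹ ∫_0^ξ e^{H/ε}` converges to `½ sign(ξ)` uniformly on every compact
subset of `[-1,1] \ {0}` as `ε → 0⁺`. -/
theorem stmt5 (H : ℝ → ℝ)
    (hcont : ContinuousOn H (Set.Icc (-1) 1))
    (heven : ∀ ξ, H (-ξ) = H ξ)
    (h0 : H 0 = 1)
    (hlt : ∀ ξ ∈ Set.Icc (-1:ℝ) 1, ξ ≠ 0 → H ξ < 1) :
    ∀ K : Set ℝ, K ⊆ Set.Icc (-1) 1 → IsCompact K → (0:ℝ) ∉ K →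
      TendstoUniformlyOn
        (fun (ε : ℝ) (ξ : ℝ) =>
          (∫ η in (-1:ℝ)..1, Real.exp (H η / ε))⁻¹ * ∫ η in (0:ℝ)..ξ, Real.exp (H η / ε))
        (fun ξ => Real.sign ξ / 2)
        (nhdsWithin 0 (Set.Ioi 0)) K := by
  intro K hK hKc hK0
  obtain ⟨δ₀, hδ₀, hδ₀K⟩ := exists_pos_le_abs_of_isClosed hKc.isClosed hK0
  set δ := min δ₀ 1
  have hδ : 0 < δ := lt_min hδ₀ one_pos
  obtain ⟨x₀, hx₀, hmax⟩ := isCompact_Icc.exists_isMaxOn (nonempty_Icc.2 (min_le_right δ₀ 1))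
    (hcont.mono (Icc_subset_Icc (by linarith) le_rfl))
  have hM : H x₀ < 1 := hlt x₀ ⟨by linarith [hx₀.1], hx₀.2⟩ (by linarith [hx₀.1])
  obtain ⟨r, hr, hrsub⟩ : ∃ r > 0, Icc (0 - r) (0 + r) ⊆ Icc (-1) 1 ∩ {x | (H x₀ + 1) / 2 ≤ H x} :=
    (nhds_basis_Icc_pos 0).mem_iff.1 <| inter_mem (Icc_mem_nhds (by norm_num) (by norm_num))
      ((hcont.continuousAt (Icc_mem_nhds (by norm_num) (by norm_num))).eventually
        (eventually_ge_nhds (by linarith)))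
  simp only [zero_sub, zero_add] at hrsub
  have htail : Tendsto (fun ε => (∫ η in (-1:ℝ)..1, Real.exp (H η / ε))⁻¹ *
      ∫ η in δ..1, Real.exp (H η / ε)) (𝓝[>] 0) (𝓝 0) :=
    tendsto_inv_integral_mul_integral_exp_div hcont (neg_lt_self hr)
      (hrsub.trans inter_subset_left) (fun x hx => (hrsub hx).2)
      (fun x hx => hmax (Ioc_subset_Icc_self (by rwa [uIoc_of_le (min_le_right δ₀ 1)] at hx)))
      (by linarith)
  refine tendstoUniformlyOn_of_dist_le htail ?_
  filter_upwards [self_mem_nhdsWithin] with ε hε ξ hξ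
  have hint : IntervalIntegrable (fun η => Real.exp (H η / ε)) volume (-1) 1 :=
    ((hcont.div_const ε).rexp).intervalIntegrable_of_Icc (by norm_num)
  exact abs_sign_div_two_sub_inv_mul_integral_le_of_even (by simp [heven])
    (fun _ => (Real.exp_pos _).le) hint
    (intervalIntegral.intervalIntegral_pos_of_pos_on hint (fun _ _ => Real.exp_pos _) (by norm_num))
    (hK hξ) hδ.le ((min_le_left _ _).trans (hδ₀K ξ hξ))
end

section
/- Under the same hypotheses, for every $t > 0$: $\tfrac12 b(u(t),u(t)) + t\,a(u(t),u(t)) + t^2 b(\partial_t u(t), \partial_t u(t)) \le \tfrac12 b(u(0),u(0))$. -/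
/-!
Along the trajectory, `b(u,u)' = -2 a(u,u)`; since `a(u,u) = -b(u',u)`, also
`a(u,u)' = -2 b(u',u') ≤ 0`, and `b(u',u')' = -2 a(u',u') ≤ 0`, so `a(u,u)` and `b(u',u')` are
nonincreasing. For `0 < s ≤ t` the function `r ↦ ½ b(u,u) + r a(u,u) + r² b(u'(t),u'(t))` then has
derivative `2r (b(u'(t),u'(t)) - b(u'(r),u'(r))) ≤ 0` on `[s, t]`, which bounds the left-hand side
by its value at `s`. Monotonicity of `a(u,u)` gives
`s a(u(s),u(s)) ≤ b(u(s/2),u(s/2)) - b(u(s),u(s))`, so by continuity of `u` at `0` that value is at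
most a quantity tending to `½ b(u(0),u(0))` as `s → 0⁺`.
-/

open MeasureTheory Filter Set Topology

/-- Joint continuity of `B`, without a bound, suffices for the product rule: the difference
quotient of `B (f r) (g r)` splits as `B (slope f s r) (g r) + B (f s) (slope g s r)`. -/
theorem HasDerivAt.linearMap_apply₂_of_continuous {𝕜 E F G : Type*} [NontriviallyNormedField 𝕜]
    [NormedAddCommGroup E] [NormedSpace 𝕜 E] [NormedAddCommGroup F] [NormedSpace 𝕜 F]
    [NormedAddCommGroup G] [NormedSpace 𝕜 G] (B : E →ₗ[𝕜] F →ₗ[𝕜] G)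
    (hB : Continuous fun p : E × F => B p.1 p.2) {f : 𝕜 → E} {g : 𝕜 → F} {f' : E} {g' : F}
    {s : 𝕜} (hf : HasDerivAt f f' s) (hg : HasDerivAt g g' s) :
    HasDerivAt (fun r => B (f r) (g r)) (B f' (g s) + B (f s) g') s := by
  rw [hasDerivAt_iff_tendsto_slope]
  have hslope : slope (fun r => B (f r) (g r)) s =
      fun r => B (slope f s r) (g r) + B (f s) (slope g s r) := by
    ext r
    simp only [slope_def_module, map_smul, map_sub, LinearMap.smul_apply, LinearMap.sub_apply,
      smul_sub]
    abel
  have hg_cont : Tendsto g (𝓝[≠] s) (𝓝 (g s)) :=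
    hg.continuousAt.tendsto.mono_left nhdsWithin_le_nhds
  rw [hslope]
  exact ((hB.tendsto _).comp (hf.tendsto_slope.prodMk_nhds hg_cont)).add
    ((hB.tendsto _).comp (tendsto_const_nhds.prodMk_nhds hg.tendsto_slope))

theorem antitoneOn_of_hasDerivAt_nonpos {D : Set ℝ} (hD : Convex ℝ D) {f f' : ℝ → ℝ}
    (hf : ∀ x ∈ D, HasDerivAt f (f' x) x) (hf'₀ : ∀ x ∈ D, f' x ≤ 0) : AntitoneOn f D :=
  antitoneOn_of_hasDerivWithinAt_nonpos hD (fun x hx => (hf x hx).continuousAt.continuousWithinAt)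
    (fun x hx => (hf x (interior_subset hx)).hasDerivWithinAt)
    (fun x hx => hf'₀ x (interior_subset hx))

structure IsRegularWeakSolution {E : Type*} [NormedAddCommGroup E] [NormedSpace ℝ E]
    (V : Submodule ℝ E) (b : E →ₗ[ℝ] E →ₗ[ℝ] ℝ) (a : E → E → ℝ) (u u' u'' : ℝ → E) : Prop where
  mem : ∀ t, 0 < t → u t ∈ V
  deriv_mem : ∀ t, 0 < t → u' t ∈ V
  hasDerivAt : ∀ t, 0 < t → HasDerivAt u (u' t) t
  hasDerivAt_deriv : ∀ t, 0 < t → HasDerivAt u' (u'' t) t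
  weak_eq : ∀ t, 0 < t → ∀ v ∈ V, b (u' t) v + a (u t) v = 0
  weak_eq_deriv : ∀ t, 0 < t → ∀ v ∈ V, b (u'' t) v + a (u' t) v = 0

namespace IsRegularWeakSolution

variable {E : Type*} [NormedAddCommGroup E] [NormedSpace ℝ E] {V : Submodule ℝ E}
  {b : E →ₗ[ℝ] E →ₗ[ℝ] ℝ} {a : E → E → ℝ} {u u' u'' : ℝ → E}

theorem b_deriv_self (hu : IsRegularWeakSolution V b a u u' u'') {t : ℝ} (ht : 0 < t) :
    b (u' t) (u t) = -a (u t) (u t) := by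
  linarith [hu.weak_eq t ht (u t) (hu.mem t ht)]

theorem b_second_deriv_self (hu : IsRegularWeakSolution V b a u u' u'')
    (hasymm : ∀ x y, a x y = a y x) {t : ℝ} (ht : 0 < t) :
    b (u'' t) (u t) = b (u' t) (u' t) := by
  linarith [hu.weak_eq_deriv t ht (u t) (hu.mem t ht), hu.weak_eq t ht (u' t) (hu.deriv_mem t ht),
    hasymm (u' t) (u t)]

theorem hasDerivAt_b_self (hu : IsRegularWeakSolution V b a u u' u'')
    (hbsymm : ∀ x y, b x y = b y x) (hbcont : Continuous fun p : E × E => b p.1 p.2)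
    {t : ℝ} (ht : 0 < t) :
    HasDerivAt (fun r => b (u r) (u r)) (-2 * a (u t) (u t)) t := by
  refine ((hu.hasDerivAt t ht).linearMap_apply₂_of_continuous b hbcont
    (hu.hasDerivAt t ht)).congr_deriv ?_
  rw [hbsymm (u t), hu.b_deriv_self ht]
  ring

theorem hasDerivAt_b_deriv_self (hu : IsRegularWeakSolution V b a u u' u'')
    (hbcont : Continuous fun p : E × E => b p.1 p.2) (hasymm : ∀ x y, a x y = a y x)
    {t : ℝ} (ht : 0 < t) :
    HasDerivAt (fun r => b (u' r) (u r)) (2 * b (u' t) (u' t)) t := by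
  refine ((hu.hasDerivAt_deriv t ht).linearMap_apply₂_of_continuous b hbcont
    (hu.hasDerivAt t ht)).congr_deriv ?_
  rw [hu.b_second_deriv_self hasymm ht]
  ring

theorem antitoneOn_b_deriv_deriv (hu : IsRegularWeakSolution V b a u u' u'')
    (hbsymm : ∀ x y, b x y = b y x) (hbcont : Continuous fun p : E × E => b p.1 p.2)
    (hann : ∀ v ∈ V, 0 ≤ a v v) :
    AntitoneOn (fun r => b (u' r) (u' r)) (Ioi 0) := by
  refine antitoneOn_of_hasDerivAt_nonpos (convex_Ioi 0) (fun r hr =>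
    (hu.hasDerivAt_deriv r hr).linearMap_apply₂_of_continuous b hbcont
      (hu.hasDerivAt_deriv r hr)) fun r hr => ?_
  have hweak := hu.weak_eq_deriv r hr (u' r) (hu.deriv_mem r hr)
  linarith [hbsymm (u' r) (u'' r), hann (u' r) (hu.deriv_mem r hr)]

theorem antitoneOn_a_self (hu : IsRegularWeakSolution V b a u u' u'')
    (hbcont : Continuous fun p : E × E => b p.1 p.2) (hbpos : ∀ x, 0 ≤ b x x)
    (hasymm : ∀ x y, a x y = a y x) :
    AntitoneOn (fun r => a (u r) (u r)) (Ioi 0) := by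
  refine (antitoneOn_of_hasDerivAt_nonpos (convex_Ioi 0)
    (fun r hr => (hu.hasDerivAt_b_deriv_self hbcont hasymm hr).neg)
    fun r _ => by linarith [hbpos (u' r)]).congr fun r hr => ?_
  show -b (u' r) (u r) = a (u r) (u r)
  rw [hu.b_deriv_self hr, neg_neg]

theorem lyapunov_le (hu : IsRegularWeakSolution V b a u u' u'')
    (hbsymm : ∀ x y, b x y = b y x) (hbcont : Continuous fun p : E × E => b p.1 p.2)
    (hasymm : ∀ x y, a x y = a y x) (hann : ∀ v ∈ V, 0 ≤ a v v) {s t : ℝ} (hs : 0 < s)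
    (hst : s ≤ t) :
    (1/2) * b (u t) (u t) + t * a (u t) (u t) + t^2 * b (u' t) (u' t) ≤
      (1/2) * b (u s) (u s) + s * a (u s) (u s) + s^2 * b (u' t) (u' t) := by
  have hpos : ∀ r ∈ Icc s t, 0 < r := fun r hr => hs.trans_le hr.1
  have hanti : AntitoneOn (fun r => (1/2) * b (u r) (u r) - r * b (u' r) (u r) +
      r^2 * b (u' t) (u' t)) (Icc s t) := by
    refine antitoneOn_of_hasDerivAt_nonpos (convex_Icc s t) (fun r hr =>
      ((((hu.hasDerivAt_b_self hbsymm hbcont (hpos r hr)).const_mul (1/2)).sub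
        ((hasDerivAt_id r).mul (hu.hasDerivAt_b_deriv_self hbcont hasymm (hpos r hr)))).add
        ((hasDerivAt_pow 2 r).mul_const _))) fun r hr => ?_
    have hB := hu.antitoneOn_b_deriv_deriv hbsymm hbcont hann (hpos r hr) (hpos t ⟨hst, le_rfl⟩)
      hr.2
    simp only [id_eq, hu.b_deriv_self (hpos r hr)]
    nlinarith [hpos r hr]
  have hts := hanti ⟨le_rfl, hst⟩ ⟨hst, le_rfl⟩ hst
  simp only [hu.b_deriv_self hs, hu.b_deriv_self (hs.trans_le hst)] at hts
  linarith

theorem mul_a_self_le (hu : IsRegularWeakSolution V b a u u' u'')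
    (hbsymm : ∀ x y, b x y = b y x) (hbcont : Continuous fun p : E × E => b p.1 p.2)
    (hbpos : ∀ x, 0 ≤ b x x) (hasymm : ∀ x y, a x y = a y x) {s : ℝ} (hs : 0 < s) :
    s * a (u s) (u s) ≤ b (u (s / 2)) (u (s / 2)) - b (u s) (u s) := by
  have hpos : ∀ r ∈ Icc (s / 2) s, 0 < r := fun r hr => (half_pos hs).trans_le hr.1
  have hanti : AntitoneOn (fun r => b (u r) (u r) + 2 * r * a (u s) (u s)) (Icc (s / 2) s) := by
    refine antitoneOn_of_hasDerivAt_nonpos (convex_Icc _ _) (fun r hr =>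
      (hu.hasDerivAt_b_self hbsymm hbcont (hpos r hr)).add
        (((hasDerivAt_id r).const_mul 2).mul_const _)) fun r hr => ?_
    have hg := hu.antitoneOn_a_self hbcont hbpos hasymm (hpos r hr) hs hr.2
    linarith
  have hs2 := half_le_self hs.le
  have hss := hanti ⟨le_rfl, hs2⟩ ⟨hs2, le_rfl⟩ hs2
  simp only at hss
  linarith

theorem regularizing_estimate (hu : IsRegularWeakSolution V b a u u' u'')
    (hbsymm : ∀ x y, b x y = b y x) (hbcont : Continuous fun p : E × E => b p.1 p.2)
    (hbpos : ∀ x, 0 ≤ b x x) (hasymm : ∀ x y, a x y = a y x) (hann : ∀ v ∈ V, 0 ≤ a v v)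
    (hu₀ : ContinuousWithinAt u (Ioi 0) 0) {t : ℝ} (ht : 0 < t) :
    (1/2) * b (u t) (u t) + t * a (u t) (u t) + t^2 * b (u' t) (u' t) ≤
      (1/2) * b (u 0) (u 0) := by
  have hN : Tendsto (fun s => b (u s) (u s)) (𝓝[>] 0) (𝓝 (b (u 0) (u 0))) :=
    (hbcont.tendsto _).comp (hu₀.tendsto.prodMk_nhds hu₀.tendsto)
  have hhalf : Tendsto (fun s : ℝ => s / 2) (𝓝[>] 0) (𝓝[>] 0) := by
    refine tendsto_nhdsWithin_of_tendsto_nhds_of_eventually_within _ ?_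
      (eventually_nhdsWithin_of_forall fun s (hs : 0 < s) => half_pos hs)
    simpa using ((continuous_id.div_const (2 : ℝ)).tendsto 0).mono_left nhdsWithin_le_nhds
  have hsq : Tendsto (fun s : ℝ => s^2 * b (u' t) (u' t)) (𝓝[>] 0) (𝓝 0) := by
    have hcont : Continuous fun s : ℝ => s^2 * b (u' t) (u' t) := by fun_prop
    simpa using (hcont.tendsto 0).mono_left nhdsWithin_le_nhds
  have hbound := ((hN.comp hhalf).sub (hN.const_mul (1/2))).add hsq
  rw [show b (u 0) (u 0) - 1/2 * b (u 0) (u 0) + 0 = 1/2 * b (u 0) (u 0) by ring] at hbound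
  refine ge_of_tendsto hbound ?_
  filter_upwards [Ioo_mem_nhdsGT ht] with s hs
  simp only [Function.comp_apply]
  linarith [hu.lyapunov_le hbsymm hbcont hasymm hann hs.1 hs.2.le,
    hu.mul_a_self_le hbsymm hbcont hbpos hasymm hs.1]

end IsRegularWeakSolution

theorem stmt13_general {E : Type*} [NormedAddCommGroup E] [InnerProductSpace ℝ E]
    (V : Submodule ℝ E)
    (b a : E → E → ℝ)
    -- `b` is a continuous inner product on `H`
    (hbsymm : ∀ x y, b x y = b y x)
    (hbadd : ∀ x y z, b (x + y) z = b x z + b y z)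
    (hbsmul : ∀ (r : ℝ) x y, b (r • x) y = r * b x y)
    (hbpos : ∀ x, 0 ≤ b x x)
    (hbcont : Continuous fun p : E × E => b p.1 p.2)
    -- `a` is a symmetric bilinear form, nonnegative on `V`
    (hasymm : ∀ x y, a x y = a y x)
    (hann : ∀ v ∈ V, 0 ≤ a v v)
    -- the solution, given by the analytic semigroup: `u ∈ C([0,∞); H) ∩ C^∞((0,∞); V)`
    (u u' u'' : ℝ → E)
    (hucont : ContinuousOn u (Set.Ici 0))
    (huV : ∀ t : ℝ, 0 < t → u t ∈ V)
    (huderiv : ∀ t : ℝ, 0 < t → HasDerivAt u (u' t) t)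
    (hu'V : ∀ t : ℝ, 0 < t → u' t ∈ V)
    (hu'deriv : ∀ t : ℝ, 0 < t → HasDerivAt u' (u'' t) t)
    -- the weak equation, satisfied by `u` and (by time differentiation) by `u'`
    (heq : ∀ t : ℝ, 0 < t → ∀ v ∈ V, b (u' t) v + a (u t) v = 0)
    (heq' : ∀ t : ℝ, 0 < t → ∀ v ∈ V, b (u'' t) v + a (u' t) v = 0) :
    ∀ t : ℝ, 0 < t →
      (1/2) * b (u t) (u t) + t * a (u t) (u t) + t^2 * b (u' t) (u' t) ≤
        (1/2) * b (u 0) (u 0) := by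
  intro t ht
  let β : E →ₗ[ℝ] E →ₗ[ℝ] ℝ := LinearMap.mk₂ ℝ b hbadd hbsmul
    (fun x y z => by rw [hbsymm, hbadd, hbsymm y, hbsymm z])
    (fun r x y => by rw [hbsymm, hbsmul, hbsymm, smul_eq_mul])
  have hu : IsRegularWeakSolution V β a u u' u'' := ⟨huV, hu'V, huderiv, hu'deriv, heq, heq'⟩
  exact hu.regularizing_estimate hbsymm hbcont hbpos hasymm hann
    ((hucont 0 self_mem_Ici).mono Ioi_subset_Ici_self) ht

/-- Regularizing estimate for the abstract variational evolution equation
`b(∂ₜu, v) + a(u, v) = 0`: for every `t > 0`,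
`½ b(u(t),u(t)) + t a(u(t),u(t)) + t² b(∂ₜu(t),∂ₜu(t)) ≤ ½ b(u(0),u(0))`. -/
theorem stmt13 {E : Type*} [NormedAddCommGroup E] [InnerProductSpace ℝ E]
    [CompleteSpace E]
    (V : Submodule ℝ E) (hVdense : Dense (V : Set E))
    (b a : E → E → ℝ)
    -- `b` is a continuous inner product on `H`
    (hbsymm : ∀ x y, b x y = b y x)
    (hbadd : ∀ x y z, b (x + y) z = b x z + b y z)
    (hbsmul : ∀ (r : ℝ) x y, b (r • x) y = r * b x y)
    (hbpos : ∀ x, 0 ≤ b x x)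
    (hbdef : ∀ x, b x x = 0 → x = 0)
    (hbcont : Continuous fun p : E × E => b p.1 p.2)
    -- `a` is a symmetric bilinear form, nonnegative on `V`
    (hasymm : ∀ x y, a x y = a y x)
    (haadd : ∀ x y z, a (x + y) z = a x z + a y z)
    (hasmul : ∀ (r : ℝ) x y, a (r • x) y = r * a x y)
    (hann : ∀ v ∈ V, 0 ≤ a v v)
    -- the solution, given by the analytic semigroup: `u ∈ C([0,∞); H) ∩ C^∞((0,∞); V)`
    (u u' u'' : ℝ → E)
    (hucont : ContinuousOn u (Set.Ici 0))
    (huV : ∀ t : ℝ, 0 < t → u t ∈ V)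
    (huderiv : ∀ t : ℝ, 0 < t → HasDerivAt u (u' t) t)
    (hu'V : ∀ t : ℝ, 0 < t → u' t ∈ V)
    (hu'deriv : ∀ t : ℝ, 0 < t → HasDerivAt u' (u'' t) t)
    (hint : ∀ t : ℝ, 0 < t → IntervalIntegrable (fun r => a (u r) (u r)) volume 0 t)
    -- the weak equation, satisfied by `u` and (by time differentiation) by `u'`
    (heq : ∀ t : ℝ, 0 < t → ∀ v ∈ V, b (u' t) v + a (u t) v = 0)
    (heq' : ∀ t : ℝ, 0 < t → ∀ v ∈ V, b (u'' t) v + a (u' t) v = 0) :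
    ∀ t : ℝ, 0 < t →
      (1/2) * b (u t) (u t) + t * a (u t) (u t) + t^2 * b (u' t) (u' t) ≤
        (1/2) * b (u 0) (u 0) :=
  stmt13_general V b a hbsymm hbadd hbsmul hbpos hbcont hasymm hann u u' u'' hucont huV huderiv hu'V
    hu'deriv heq heq'
end
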